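/- Let L be a simple arrangement of n non-vertical lines in ℝ². Suppose F is an unbounded face of level i containing points of arbitrarily negative x-coordinate (a left-unbounded face), and F' is an unbounded face of level j containing points of arbitrarily large x-coordinate (a right-unbounded face). If i ≤ n/2 and j ≤ n/2, then every dual path from F to F' has length at least i + j + 1; if i ≥ n/2 and j ≥ n/2, then every dual path from F to F' has length at least 2n − i − j + 1. -/

import Mathlib

/-!
Record for each face the set of lines lying below it. Crossing an edge changes this set only
by the line carrying the edge, so a dual path from `F` to `F'` has more faces than the two sets
have elements in their symmetric difference. No line can lie below both a left-unbounded face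
and a right-unbounded one while another line lies above both: left-unboundedness forces the
upper line to have the smaller slope, right-unboundedness the larger, so the lines would be
parallel. Hence the two sets are disjoint, with symmetric difference of size `i + j`, or cover
all `n` lines, with symmetric difference of size `2n - i - j`; the smaller of the two is
`i + j` when `i + j ≤ n` and `2n - i - j` when `i + j ≥ n`.
-/


open Set

/-- A point of the Euclidean plane. -/
abbrev Pt : Type := ℝ × ℝ

/-- A line: a 1-dimensional affine subspace of ℝ², described parametrically. -/
def IsLine (l : Set Pt) : Prop :=
  ∃ p v : Pt, v ≠ 0 ∧ l = {q : Pt | ∃ t : ℝ, q = p + t • v}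

/-- A simple line arrangement: a finite set of lines, any two distinct lines meet in
exactly one point, and no point lies on three distinct lines. -/
def SimpleArrangement (L : Finset (Set Pt)) : Prop :=
  (∀ l ∈ L, IsLine l) ∧
  (∀ l ∈ L, ∀ l' ∈ L, l ≠ l' → ∃! p : Pt, p ∈ l ∧ p ∈ l') ∧
  (∀ p : Pt, {l : Set Pt | l ∈ L ∧ p ∈ l}.ncard ≤ 2)

/-- The faces of the arrangement: connected components of the complement of the union. -/
def IsFace (L : Finset (Set Pt)) (F : Set Pt) : Prop :=
  ∃ p : Pt, p ∉ (⋃ l ∈ L, l) ∧ F = connectedComponentIn (⋃ l ∈ L, l)ᶜ p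

/-- Two faces are adjacent (share an edge) if they are distinct and some point of
the intersection of their closures lies on exactly one line of `L`. -/
def Adjacent (L : Finset (Set Pt)) (F F' : Set Pt) : Prop :=
  F ≠ F' ∧ ∃ p ∈ closure F ∩ closure F', ∃! l : Set Pt, l ∈ L ∧ p ∈ l

/-- A dual path: a finite sequence of pairwise distinct faces with consecutive faces
adjacent. Its length is the length of the list. -/
def IsDualPath (L : Finset (Set Pt)) (P : List (Set Pt)) : Prop :=
  (∀ F ∈ P, IsFace L F) ∧ P.Nodup ∧ P.Chain' (Adjacent L)

/-- A line is non-vertical if it is the graph of an affine function `x ↦ a·x + b`. -/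
def NonVertical (l : Set Pt) : Prop :=
  ∃ a b : ℝ, l = {q : Pt | q.2 = a * q.1 + b}

/-- A face `F` is above a non-vertical line `l` if `y > a·x + b` for every `(x, y) ∈ F`. -/
def Above (F l : Set Pt) : Prop :=
  ∃ a b : ℝ, l = {q : Pt | q.2 = a * q.1 + b} ∧ ∀ q ∈ F, a * q.1 + b < q.2

/-- The level of a face: the number of lines of `L` that the face is above. -/
noncomputable def faceLevel (L : Finset (Set Pt)) (F : Set Pt) : ℕ :=
  {l : Set Pt | l ∈ L ∧ Above F l}.ncard

open scoped Classical symmDiff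

section

variable {α β : Type*} [DecidableEq β]

theorem Finset.card_symmDiff_add_card_inter (A B : Finset β) :
    (A ∆ B).card + (A ∩ B).card = (A ∪ B).card := by
  rw [symmDiff_eq_sup_sdiff_inf, Finset.sup_eq_union, Finset.inf_eq_inter,
    Finset.card_sdiff_of_subset Finset.inter_subset_union,
    Nat.sub_add_cancel (Finset.card_le_card Finset.inter_subset_union)]

theorem Finset.card_symmDiff_eq_of_disjoint_or_union_eq {A B C : Finset β}
    (h : Disjoint A B ∨ A ∪ B = C) :
    ((A ∆ B).card : ℤ) = A.card + B.card ∨ ((A ∆ B).card : ℤ) = 2 * C.card - A.card - B.card := by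
  have hsymm := Finset.card_symmDiff_add_card_inter A B
  have hunion := Finset.card_union_add_card_inter A B
  rcases h with h | rfl
  · rw [Finset.disjoint_iff_inter_eq_empty.mp h, Finset.card_empty] at hsymm hunion
    left
    omega
  · right
    omega

theorem card_symmDiff_lt_length_of_isChain (f : α → Finset β) :
    ∀ {P : List α} {x y : α}, P.IsChain (fun u v => (f u ∆ f v).card ≤ 1) →
      P.head? = some x → P.getLast? = some y → (f x ∆ f y).card < P.length
  | [], _, _, _, hx, _ => by simp at hx
  | [u], x, y, _, hx, hy => by
    obtain rfl : u = x := by simpa using hx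
    obtain rfl : u = y := by simpa using hy
    simp
  | u :: v :: P, x, y, hP, hx, hy => by
    obtain rfl : u = x := by simpa using hx
    rw [List.isChain_cons_cons] at hP
    have ih := card_symmDiff_lt_length_of_isChain f hP.2 rfl
      (by rwa [List.getLast?_cons_cons] at hy)
    have htri := (Finset.card_le_card (symmDiff_triangle (f u) (f v) (f y))).trans
      (Finset.card_union_le _ _)
    simp only [List.length_cons] at ih ⊢
    omega

end

theorem graph_eq_graph_iff {a b a' b' : ℝ} :
    {q : Pt | q.2 = a * q.1 + b} = {q : Pt | q.2 = a' * q.1 + b'} ↔ a = a' ∧ b = b' := by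
  refine ⟨fun h => ?_, fun ⟨ha, hb⟩ => ha ▸ hb ▸ rfl⟩
  have h0 : ((0 : ℝ), b) ∈ {q : Pt | q.2 = a' * q.1 + b'} := h ▸ by simp
  have h1 : ((1 : ℝ), a + b) ∈ {q : Pt | q.2 = a' * q.1 + b'} := h ▸ by simp
  simp only [Set.mem_ofPred_eq] at h0 h1
  constructor <;> linarith

theorem above_iff {F l : Set Pt} {a b : ℝ} (hl : l = {q : Pt | q.2 = a * q.1 + b}) :
    Above F l ↔ ∀ q ∈ F, a * q.1 + b < q.2 := by
  refine ⟨?_, fun h => ⟨a, b, hl, h⟩⟩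
  rintro ⟨a', b', hl', h⟩
  obtain ⟨rfl, rfl⟩ := graph_eq_graph_iff.mp (hl.symm.trans hl')
  exact h

namespace IsFace

variable {L : Finset (Set Pt)} {F : Set Pt}

theorem not_mem_of_mem (hF : IsFace L F) {l : Set Pt} (hl : l ∈ L) {q : Pt} (hq : q ∈ F) :
    q ∉ l := by
  obtain ⟨p, -, rfl⟩ := hF
  exact fun hql => connectedComponentIn_subset _ _ hq (Set.mem_biUnion hl hql)

theorem above_or_below (hF : IsFace L F) {l : Set Pt} (hl : l ∈ L) {a b : ℝ}
    (hlab : l = {q : Pt | q.2 = a * q.1 + b}) :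
    (∀ q ∈ F, a * q.1 + b < q.2) ∨ (∀ q ∈ F, q.2 < a * q.1 + b) := by
  by_contra! ⟨⟨q₁, hq₁, h₁⟩, ⟨q₂, hq₂, h₂⟩⟩
  have hpre : IsPreconnected F := by
    obtain ⟨p, -, rfl⟩ := hF
    exact isPreconnected_connectedComponentIn
  obtain ⟨q, hq, hql⟩ := hpre.intermediate_value₂ hq₁ hq₂
    (f := fun q : Pt => q.2) (g := fun q : Pt => a * q.1 + b) (by fun_prop) (by fun_prop) h₁ h₂
  exact hF.not_mem_of_mem hl hq (hlab ▸ hql)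

theorem below_of_not_above (hF : IsFace L F) {l : Set Pt} (hl : l ∈ L) {a b : ℝ}
    (hlab : l = {q : Pt | q.2 = a * q.1 + b}) (h : ¬ Above F l) :
    ∀ q ∈ F, q.2 < a * q.1 + b :=
  (hF.above_or_below hl hlab).resolve_left ((above_iff hlab).not.mp h)

theorem above_iff_of_mem_closure (hF : IsFace L F) {l : Set Pt} (hl : l ∈ L) {a b : ℝ}
    (hlab : l = {q : Pt | q.2 = a * q.1 + b}) {p : Pt} (hpF : p ∈ closure F) (hpl : p ∉ l) :
    Above F l ↔ a * p.1 + b < p.2 := by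
  have hne : a * p.1 + b ≠ p.2 := fun h => hpl (hlab ▸ h.symm)
  rw [above_iff hlab]
  constructor
  · intro h
    exact (closure_lt_subset_le (f := fun q : Pt => a * q.1 + b) (g := Prod.snd)
      (by fun_prop) (by fun_prop) (closure_mono h hpF)).lt_of_ne hne
  · intro hp
    refine (hF.above_or_below hl hlab).resolve_right fun h => ?_
    exact hp.not_ge (closure_lt_subset_le (f := Prod.snd) (g := fun q : Pt => a * q.1 + b)
      (by fun_prop) (by fun_prop) (closure_mono h hpF))

end IsFace

noncomputable def linesBelow (L : Finset (Set Pt)) (F : Set Pt) : Finset (Set Pt) :=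
  L.filter (Above F)

section Arrangement

variable {L : Finset (Set Pt)}

theorem mem_linesBelow {F l : Set Pt} : l ∈ linesBelow L F ↔ l ∈ L ∧ Above F l :=
  Finset.mem_filter

theorem faceLevel_eq_card_linesBelow (F : Set Pt) : faceLevel L F = (linesBelow L F).card := by
  rw [faceLevel, ← Set.ncard_coe_finset]
  congr 1
  ext l
  simp [linesBelow]

theorem Adjacent.card_symmDiff_linesBelow_le_one (hnv : ∀ l ∈ L, NonVertical l)
    {G G' : Set Pt} (hG : IsFace L G) (hG' : IsFace L G') (hGG' : Adjacent L G G') :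
    (linesBelow L G ∆ linesBelow L G').card ≤ 1 := by
  obtain ⟨-, p, ⟨hpG, hpG'⟩, l₀, -, hl₀⟩ := hGG'
  suffices linesBelow L G ∆ linesBelow L G' ⊆ {l₀} from
    (Finset.card_le_card this).trans (Finset.card_singleton l₀).le
  intro l hl
  rw [Finset.mem_singleton]
  by_contra hll₀
  have hlL : l ∈ L := by
    rcases Finset.mem_symmDiff.mp hl with ⟨h, -⟩ | ⟨h, -⟩ <;> exact (mem_linesBelow.mp h).1
  have hpl : p ∉ l := fun hpl => hll₀ (hl₀ l ⟨hlL, hpl⟩)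
  obtain ⟨a, b, hlab⟩ := hnv l hlL
  have hiff : Above G l ↔ Above G' l := by
    rw [hG.above_iff_of_mem_closure hlL hlab hpG hpl,
      hG'.above_iff_of_mem_closure hlL hlab hpG' hpl]
  rw [Finset.mem_symmDiff, mem_linesBelow, mem_linesBelow, hiff] at hl
  tauto

theorem card_symmDiff_linesBelow_lt_length (hnv : ∀ l ∈ L, NonVertical l) {P : List (Set Pt)}
    (hP : IsDualPath L P) {F F' : Set Pt} (hF : P.head? = some F) (hF' : P.getLast? = some F') :
    (linesBelow L F ∆ linesBelow L F').card < P.length := by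
  obtain ⟨hfaces, -, hchain⟩ := hP
  refine card_symmDiff_lt_length_of_isChain (linesBelow L) ?_ hF hF'
  exact hchain.imp_of_mem_imp fun G G' hG hG' hGG' =>
    hGG'.card_symmDiff_linesBelow_le_one hnv (hfaces G hG) (hfaces G' hG')

end Arrangement

theorem le_of_frequently_lt_atBot {a b c d : ℝ} (h : ∀ M : ℝ, ∃ x < M, a * x + b < c * x + d) :
    c ≤ a := by
  by_contra! hac
  obtain ⟨x, hx, hlt⟩ := h ((b - d) / (c - a))
  rw [lt_div_iff₀ (sub_pos.mpr hac)] at hx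
  linarith

theorem le_of_frequently_lt_atTop {a b c d : ℝ} (h : ∀ M : ℝ, ∃ x > M, a * x + b < c * x + d) :
    a ≤ c := by
  by_contra! hca
  obtain ⟨x, hx, hlt⟩ := h ((d - b) / (a - c))
  rw [gt_iff_lt, div_lt_iff₀ (sub_pos.mpr hca)] at hx
  linarith

theorem linesBelow_disjoint_or_union_eq {L : Finset (Set Pt)} (hL : SimpleArrangement L)
    (hnv : ∀ l ∈ L, NonVertical l) {F F' : Set Pt} (hF : IsFace L F) (hF' : IsFace L F')
    (hFunb : ∀ M : ℝ, ∃ p ∈ F, p.1 < M) (hF'unb : ∀ M : ℝ, ∃ p ∈ F', M < p.1) :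
    Disjoint (linesBelow L F) (linesBelow L F') ∨ linesBelow L F ∪ linesBelow L F' = L := by
  by_contra! ⟨hdisj, hunion⟩
  obtain ⟨l, hlF, hlF'⟩ := Finset.not_disjoint_iff.mp hdisj
  obtain ⟨m, hmL, hm⟩ : ∃ m ∈ L, m ∉ linesBelow L F ∪ linesBelow L F' := by
    by_contra! h
    exact hunion (Finset.Subset.antisymm
      (Finset.union_subset (Finset.filter_subset _ _) (Finset.filter_subset _ _)) h)
  rw [Finset.mem_union, mem_linesBelow, mem_linesBelow] at hm
  rw [mem_linesBelow] at hlF hlF'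
  obtain ⟨hlL, hlF⟩ := hlF
  obtain ⟨a, b, hlab⟩ := hnv l hlL
  obtain ⟨c, d, hmcd⟩ := hnv m hmL
  have hca : c ≤ a := le_of_frequently_lt_atBot fun M => by
    obtain ⟨p, hpF, hp⟩ := hFunb M
    exact ⟨p.1, hp, ((above_iff hlab).mp hlF p hpF).trans
      (hF.below_of_not_above hmL hmcd (fun h => hm (.inl ⟨hmL, h⟩)) p hpF)⟩
  have hac : a ≤ c := le_of_frequently_lt_atTop fun M => by
    obtain ⟨p, hpF', hp⟩ := hF'unb M
    exact ⟨p.1, hp, ((above_iff hlab).mp hlF'.2 p hpF').trans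
      (hF'.below_of_not_above hmL hmcd (fun h => hm (.inr ⟨hmL, h⟩)) p hpF')⟩
  have hlm : l ≠ m := by
    rintro rfl
    exact hm (.inl ⟨hlL, hlF⟩)
  obtain ⟨p, ⟨hpl, hpm⟩, -⟩ := hL.2.1 l hlL m hmL hlm
  rw [hlab] at hpl
  rw [hmcd] at hpm
  have hbd : b = d := by
    simp only [Set.mem_ofPred_eq, le_antisymm hac hca] at hpl hpm
    linarith
  exact hlm (by rw [hlab, hmcd, le_antisymm hac hca, hbd])

/-- Lower bounds on the length of a dual path from a left-unbounded face of level `i` to a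
right-unbounded face of level `j`: if `i, j ≤ n/2` the length is at least `i + j + 1`, and
if `i, j ≥ n/2` it is at least `2n − i − j + 1`. -/
theorem statement17 (n : ℕ) (L : Finset (Set Pt))
    (hL : SimpleArrangement L) (hcard : L.card = n)
    (hnv : ∀ l ∈ L, NonVertical l)
    (F F' : Set Pt) (hF : IsFace L F) (hF' : IsFace L F')
    (hFunb : ∀ M : ℝ, ∃ p ∈ F, p.1 < M)
    (hF'unb : ∀ M : ℝ, ∃ p ∈ F', M < p.1)
    (i j : ℕ) (hi : i = faceLevel L F) (hj : j = faceLevel L F') :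
    (((i : ℝ) ≤ n / 2 ∧ (j : ℝ) ≤ n / 2) →
      ∀ P : List (Set Pt), IsDualPath L P →
        P.head? = some F → P.getLast? = some F' →
        (i : ℝ) + j + 1 ≤ P.length) ∧
    (((n : ℝ) / 2 ≤ i ∧ (n : ℝ) / 2 ≤ j) →
      ∀ P : List (Set Pt), IsDualPath L P →
        P.head? = some F → P.getLast? = some F' →
        2 * (n : ℝ) - i - j + 1 ≤ P.length) := by
  rw [faceLevel_eq_card_linesBelow] at hi hj
  subst hi hj hcard
  set A := linesBelow L F
  set B := linesBelow L F'
  have hΔ : ((A ∆ B).card : ℝ) = A.card + B.card ∨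
      ((A ∆ B).card : ℝ) = 2 * L.card - A.card - B.card := by
    exact_mod_cast Finset.card_symmDiff_eq_of_disjoint_or_union_eq
      (linesBelow_disjoint_or_union_eq hL hnv hF hF' hFunb hF'unb)
  have hlen : ∀ P : List (Set Pt), IsDualPath L P → P.head? = some F → P.getLast? = some F' →
      ((A ∆ B).card : ℝ) + 1 ≤ P.length := fun P hP hhead hlast => by
    exact_mod_cast card_symmDiff_linesBelow_lt_length hnv hP hhead hlast
  constructor <;>
  · rintro ⟨hi, hj⟩ P hP hhead hlast
    have := hlen P hP hhead hlast
    rcases hΔ with h | h <;> linarith
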